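/- arXiv:1704.07252 — 3 statements merged into one kernel-verified Lean document; each statement's English description precedes it below -/
import Mathlib

section
/- Suppose the OSC holds. Then for each vertex u ∈ V, the attractor component F_u is uncountable and has no isolated points. -/
open MeasureTheory Metric Set Filter Topology Asymptotics

noncomputable section

/-- Euclidean space `ℝ^m`. -/
abbrev Euc (m : ℕ) : Type := EuclideanSpace ℝ (Fin m)

/-- The topological support of a measure. -/
def mSupport {X : Type} [TopologicalSpace X] [MeasurableSpace X]
    (μ : Measure X) : Set X :=
  {x | ∀ U : Set X, IsOpen U → x ∈ U → 0 < μ U}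

/-- The probability weight of a finite path (product of its edge weights). -/
def pathProb {E : Type} (w : E → ℝ) (p : List E) : ℝ := (p.map w).prod

/-- `f` is a subpath of `g`. -/
def IsSubpath {E : Type} (f g : List E) : Prop := ∃ s t : List E, g = s ++ f ++ t

/-- The distance between two sets. -/
def setDist {X : Type} [PseudoMetricSpace X] (A B : Set X) : ℝ :=
  sInf (Set.image2 dist A B)

/-- The `q`-th packing moment `M_u^q(A,r)` of a measure `μ` on `A` at scale `r`:
the supremum of `∑_{x∈D} μ(B̄(x,r))^q` over `r`-separated finite subsets `D ⊆ A`. -/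
def packMoment {m : ℕ} (μ : Measure (Euc m)) (q : ℝ) (A : Set (Euc m)) (r : ℝ) : ℝ :=
  sSup {s : ℝ | ∃ D : Finset (Euc m), ↑D ⊆ A ∧
    (∀ x ∈ D, ∀ y ∈ D, x ≠ y → 2 * r < dist x y) ∧
    s = ∑ x ∈ D, (μ (Metric.closedBall x r)).toReal ^ q}

/-- The spectral radius of a real square matrix (via its complex spectrum). -/
def specRad {n : Type} [Fintype n] [DecidableEq n] (M : Matrix n n ℝ) : ENNReal :=
  spectralRadius ℂ (M.map (algebraMap ℝ ℂ))

/-- A matrix is irreducible if some power has a positive `ij` entry, for every `i j`. -/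
def MatIrreducible {n : Type} [Fintype n] [DecidableEq n] (M : Matrix n n ℝ) : Prop :=
  ∀ i j : n, ∃ k : ℕ, 0 < (M ^ k) i j

/-- A self-similar directed-graph IFS on `ℝ^m`: a finite strongly connected directed
multigraph with at least two edges out of each vertex, each edge carrying a contracting
similarity of `ℝ^m`. -/
structure GIFS (m : ℕ) (V E : Type) [Fintype V] [Fintype E] where
  src : E → V
  dst : E → V
  ratio : E → ℝ
  ratio_pos : ∀ e, 0 < ratio e
  ratio_lt_one : ∀ e, ratio e < 1
  map : E → Euc m → Euc m
  map_similarity : ∀ e x y, dist (map e x) (map e y) = ratio e * dist x y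
  two_edges : ∀ u : V, ∃ e f : E, e ≠ f ∧ src e = u ∧ src f = u
  strongly_connected : ∀ u v : V, ∃ p : List E, p ≠ [] ∧
    p.Chain' (fun a b => dst a = src b) ∧ p.head?.map src = some u ∧
    p.getLast?.map dst = some v

namespace GIFS

variable {m : ℕ} {V E : Type} [Fintype V] [Fintype E] (G : GIFS m V E)

/-- `p` is a directed path (consecutive edges match up). -/
def IsPath (p : List E) : Prop := p.Chain' (fun a b => G.dst a = G.src b)

/-- `p` is a nonempty directed path from `u` to `v`. -/
def IsPathFrom (u v : V) (p : List E) : Prop :=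
  p ≠ [] ∧ G.IsPath p ∧ p.head?.map G.src = some u ∧ p.getLast?.map G.dst = some v

/-- The contraction `S_{e₁} ∘ ⋯ ∘ S_{e_k}` along a path. -/
def pathMap (p : List E) : Euc m → Euc m := p.foldr (fun e f => G.map e ∘ f) id

/-- The contraction ratio along a path. -/
def pathRatio (p : List E) : ℝ := (p.map G.ratio).prod

/-- The terminal vertex of a path (with default `u` for the empty path). -/
def pathDst (u : V) (p : List E) : V := (p.getLast?.map G.dst).getD u

/-- `(F u)_{u ∈ V}` is the attractor: the unique list of nonempty compact sets with
`F u = ⋃_{e ∈ E_u¹} S_e(F_{t(e)})`. -/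
def IsAttractor (F : V → Set (Euc m)) : Prop :=
  (∀ u, (F u).Nonempty) ∧ (∀ u, IsCompact (F u)) ∧
  (∀ u, F u = ⋃ e ∈ {e : E | G.src e = u}, G.map e '' F (G.dst e))

/-- Probability weights on the edges: each in `(0,1)`, summing to `1` at each vertex. -/
def IsProbWeights (w : E → ℝ) : Prop :=
  (∀ e, w e ∈ Set.Ioo (0 : ℝ) 1) ∧
  (∀ u : V, ∑ e : E, Set.indicator {e : E | G.src e = u} w e = 1)

/-- `(μ u)_{u ∈ V}` are the self-similar measures: Borel probability measures with
`μ_u(A) = ∑_{e ∈ E_u¹} p_e μ_{t(e)}(S_e⁻¹(A))` and `supp μ_u = F u`. -/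
def IsSelfSimilarMeasures (w : E → ℝ) (F : V → Set (Euc m)) (μ : V → Measure (Euc m)) : Prop :=
  (∀ u, IsProbabilityMeasure (μ u)) ∧
  (∀ u (A : Set (Euc m)), MeasurableSet A →
    μ u A = ∑ e : E, Set.indicator {e : E | G.src e = u}
      (fun e => ENNReal.ofReal (w e) * μ (G.dst e) (G.map e ⁻¹' A)) e) ∧
  (∀ u, mSupport (μ u) = F u)

/-- The strong separation condition. -/
def SSC (F : V → Set (Euc m)) : Prop :=
  ∀ u : V, ∀ e f : E, G.src e = u → G.src f = u → e ≠ f →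
    (G.map e '' F (G.dst e)) ∩ (G.map f '' F (G.dst f)) = ∅

/-- The open set condition with open sets `U`. -/
def OSCWith (U : V → Set (Euc m)) : Prop :=
  (∀ u, (U u).Nonempty ∧ IsOpen (U u) ∧ Bornology.IsBounded (U u)) ∧
  (∀ e : E, G.map e '' U (G.dst e) ⊆ U (G.src e)) ∧
  (∀ u : V, ∀ e f : E, G.src e = u → G.src f = u → e ≠ f →
    (G.map e '' U (G.dst e)) ∩ (G.map f '' U (G.dst f)) = ∅)

/-- The open set condition. -/
def OSC : Prop := ∃ U : V → Set (Euc m), G.OSCWith U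

variable [DecidableEq V]

/-- The matrix `A(q,β)` with `uv` entry `∑_{e ∈ E¹_{uv}} p_e^q r_e^β`. -/
def matA (w : E → ℝ) (q β : ℝ) : Matrix V V ℝ :=
  Matrix.of fun u v => ∑ e : E,
    Set.indicator {e : E | G.src e = u ∧ G.dst e = v}
      (fun e => w e ^ q * G.ratio e ^ β) e

/-- The matrix `B(q,γ,l)` with `uv` entry `∑_{e ∈ E^l_{uv}, e ≠ l_u} p_e^q r_e^γ`. -/
def matB (w : E → ℝ) (q γ : ℝ) (l : ℕ) (lu : V → List E) : Matrix V V ℝ :=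
  Matrix.of fun u v => ∑ p : List.Vector E l,
    Set.indicator {p : List.Vector E l | G.IsPathFrom u v p.toList ∧ p.toList ≠ lu u}
      (fun p => pathProb w p.toList ^ q * G.pathRatio p.toList ^ γ) p

/-- The matrix of measures `P` with `uv` entry `∑_{e ∈ E¹_{uv}} p_e^q r_e^{β} δ_{ln(1/r_e)}`. -/
def matP (w : E → ℝ) (q β : ℝ) : V → V → Measure ℝ :=
  fun u v => ∑ e : E,
    (Set.indicator {e : E | G.src e = u ∧ G.dst e = v}
      (fun e => ENNReal.ofReal (w e ^ q * G.ratio e ^ β)) e) •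
      Measure.dirac (Real.log ((G.ratio e)⁻¹))

end GIFS

/-- `P` is a lattice matrix of measures with span `lam`. -/
def IsLatticeMatrix {V : Type} (P : V → V → MeasureTheory.Measure ℝ) (lam : ℝ) : Prop :=
  0 < lam ∧
  ∃ (L : V → V → ℝ) (b : V → V → ℝ),
    (∀ u v : V, 0 < L u v) ∧
    -- (a) each diagonal support generates the group `L u u • ℤ`
    (∀ u : V, AddSubgroup.closure (mSupport (P u u)) = AddSubgroup.zmultiples (L u u)) ∧
    -- (b) off-diagonal supports lie in `b u v + L u v • ℤ`, with `L u v` maximal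
    (∀ u v : V, u ≠ v →
      (mSupport (P u v) ⊆ {x : ℝ | ∃ n : ℤ, x = b u v + n * L u v}) ∧
      (∀ L' : ℝ, 0 < L' →
        (∃ b' : ℝ, mSupport (P u v) ⊆ {x : ℝ | ∃ n : ℤ, x = b' + n * L'}) → L' ≤ L u v)) ∧
    -- (c) the numbers `L u v` generate the group `lam • ℤ`
    (AddSubgroup.closure {x : ℝ | ∃ u v : V, x = L u v} = AddSubgroup.zmultiples lam) ∧
    -- (d) `supp P_uv + supp P_vw − supp P_uw ⊆ lam • ℤ`
    (∀ u v z : V, ∀ a ∈ mSupport (P u v), ∀ a' ∈ mSupport (P v z), ∀ a'' ∈ mSupport (P u z),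
      ∃ n : ℤ, a + a' - a'' = n * lam)

/-!
Every point `x ∈ F u` lies in a copy `S_p(F_v)` of some `F_v` under a path map `S_p` of
arbitrarily small ratio. As `S_p` is injective, once every `F_v` has two points this copy contains
a point of `F u` other than `x` close to `x`; and a nonempty closed set without isolated points in
`ℝ^m` is uncountable.

Were some `F_u` a single point `{x}`, then by strong connectivity every `F_v` would be a single
point. Following two distinct edges out of `u` and then paths back to `u` gives two similarities
fixing `x` and mapping `U_u` into itself with disjoint images. Their two composites have the same
ratio `r`, so in dimension `d` the Hausdorff measure of `U_u ∩ B(x, r^n t)` is at least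
`(2 r^d)^n` times that of `U_u ∩ B(x, t)`, whereas `B(x, r^n t)` has only `r^{nd}` times the
measure of `B(x, t)`.
-/

open scoped ENNReal Pointwise
open Module

def IsSimilarity {X Y : Type*} [PseudoMetricSpace X] [PseudoMetricSpace Y] (r : ℝ)
    (f : X → Y) : Prop :=
  ∀ a b, dist (f a) (f b) = r * dist a b

namespace IsSimilarity

variable {X Y Z : Type*} {r s : ℝ}

theorem id [PseudoMetricSpace X] : IsSimilarity 1 (id : X → X) := fun _ _ => (one_mul _).symm

theorem comp [PseudoMetricSpace X] [PseudoMetricSpace Y] [PseudoMetricSpace Z] {f : Y → Z}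
    {g : X → Y} (hf : IsSimilarity r f) (hg : IsSimilarity s g) :
    IsSimilarity (r * s) (f ∘ g) :=
  fun a b => by rw [Function.comp_apply, Function.comp_apply, hf, hg, mul_assoc]

theorem continuous [PseudoMetricSpace X] [PseudoMetricSpace Y] {f : X → Y}
    (hf : IsSimilarity r f) : Continuous f :=
  (LipschitzWith.of_dist_le_mul fun a b => (hf a b).trans_le
    (mul_le_mul_of_nonneg_right (Real.le_coe_toNNReal r) dist_nonneg)).continuous

theorem injective [MetricSpace X] [PseudoMetricSpace Y] {f : X → Y} (hf : IsSimilarity r f)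
    (hr : r ≠ 0) : Function.Injective f := fun a b hab => by
  simpa [hab, hr] using hf a b

theorem hausdorffMeasure_image [MetricSpace X] [MeasurableSpace X] [BorelSpace X]
    [NormedAddCommGroup Y] [NormedSpace ℝ Y] [MeasurableSpace Y] [BorelSpace Y] {f : X → Y}
    (hf : IsSimilarity r f) (hr : 0 < r) {d : ℝ} (hd : 0 ≤ d) (t : Set X) :
    μH[d] (f '' t) = ENNReal.ofReal (r ^ d) * μH[d] t := by
  have hiso : Isometry fun a => r⁻¹ • f a := Isometry.of_dist_eq fun a b => by
    rw [dist_smul₀, hf, Real.norm_eq_abs, abs_inv, abs_of_pos hr, inv_mul_cancel_left₀ hr.ne']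
  have himage : f '' t = r • (fun a => r⁻¹ • f a) '' t := by
    rw [← image_smul, image_image]
    simp [smul_smul, mul_inv_cancel₀ hr.ne']
  rw [himage, Measure.hausdorffMeasure_smul₀ hd hr.ne', hiso.hausdorffMeasure_image (Or.inl hd),
    ENNReal.smul_def, smul_eq_mul, Real.nnnorm_of_nonneg hr.le, ENNReal.ofReal,
    Real.toNNReal_rpow_of_nonneg hr.le, Real.toNNReal_of_nonneg hr.le]

end IsSimilarity

section FixedPoint

variable {E : Type*} [NormedAddCommGroup E] [NormedSpace ℝ E] [FiniteDimensional ℝ E]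
  [MeasurableSpace E] [BorelSpace E] {A B : E → E} {x : E} {U : Set E}

theorem two_mul_hausdorffMeasure_inter_ball_le {r : ℝ} (hr : 0 < r) (hA : IsSimilarity r A)
    (hB : IsSimilarity r B) (hAx : Function.IsFixedPt A x) (hBx : Function.IsFixedPt B x)
    (hU : IsOpen U) (hAU : MapsTo A U U) (hBU : MapsTo B U U) (hAB : Disjoint (A '' U) (B '' U))
    (t : ℝ) :
    2 * ENNReal.ofReal (r ^ finrank ℝ E) * μH[finrank ℝ E] (U ∩ ball x t) ≤
      μH[finrank ℝ E] (U ∩ ball x (r * t)) := by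
  set S := U ∩ ball x t
  have hd : (0 : ℝ) ≤ finrank ℝ E := Nat.cast_nonneg _
  have himage : ∀ T : E → E, IsSimilarity r T → Function.IsFixedPt T x → MapsTo T U U →
      T '' S ⊆ U ∩ ball x (r * t) := by
    rintro T hT hTx hTU _ ⟨y, ⟨hyU, hyx⟩, rfl⟩
    refine ⟨hTU hyU, ?_⟩
    rw [mem_ball, ← hTx, hT]
    exact mul_lt_mul_of_pos_left hyx hr
  have hBS : MeasurableSet (B '' S) :=
    (hU.measurableSet.inter measurableSet_ball).image_of_continuousOn_injOn
      hB.continuous.continuousOn (hB.injective hr.ne').injOn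
  calc 2 * ENNReal.ofReal (r ^ finrank ℝ E) * μH[finrank ℝ E] S
      = μH[finrank ℝ E] (A '' S) + μH[finrank ℝ E] (B '' S) := by
        rw [hA.hausdorffMeasure_image hr hd, hB.hausdorffMeasure_image hr hd, Real.rpow_natCast]
        ring
    _ = μH[finrank ℝ E] (A '' S ∪ B '' S) :=
        (measure_union (hAB.mono (image_mono inter_subset_left) (image_mono inter_subset_left))
          hBS).symm
    _ ≤ μH[finrank ℝ E] (U ∩ ball x (r * t)) :=
        measure_mono (union_subset (himage A hA hAx hAU) (himage B hB hBx hBU))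

theorem not_disjoint_image_of_isFixedPt_of_ratio_eq {r : ℝ} (hr : 0 < r) (hA : IsSimilarity r A)
    (hB : IsSimilarity r B) (hAx : Function.IsFixedPt A x) (hBx : Function.IsFixedPt B x)
    (hU : IsOpen U) (hne : U.Nonempty) (hAU : MapsTo A U U) (hBU : MapsTo B U U) :
    ¬ Disjoint (A '' U) (B '' U) := by
  intro hAB
  set d := finrank ℝ E
  set μ : Measure E := μH[d]
  set c := ENNReal.ofReal (r ^ d)
  obtain ⟨y, hy⟩ := hne
  set t := dist y x + 1
  have ht : 0 < t := by positivity
  have hpos : μ (U ∩ ball x t) ≠ 0 :=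
    ((hU.inter isOpen_ball).measure_pos μ ⟨y, hy, by simp [t]⟩).ne'
  have hlower : ∀ n : ℕ,
      (2 * c) ^ n * μ (U ∩ ball x t) ≤ μ (U ∩ ball x (r ^ n * t)) := by
    intro n
    induction n with
    | zero => simp
    | succ n ih =>
      calc (2 * c) ^ (n + 1) * μ (U ∩ ball x t)
          = 2 * c * ((2 * c) ^ n * μ (U ∩ ball x t)) := by ring
        _ ≤ 2 * c * μ (U ∩ ball x (r ^ n * t)) := by gcongr
        _ ≤ μ (U ∩ ball x (r ^ (n + 1) * t)) := by
          rw [pow_succ', mul_assoc r]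
          exact two_mul_hausdorffMeasure_inter_ball_le hr hA hB hAx hBx hU hAU hBU hAB _
  have hupper : ∀ n : ℕ, μ (U ∩ ball x (r ^ n * t)) ≤ c ^ n * μ (ball x t) := by
    intro n
    refine (measure_mono inter_subset_right).trans_eq ?_
    rw [Measure.addHaar_ball_of_pos μ x ht, Measure.addHaar_ball_of_pos μ x (by positivity),
      mul_pow, ENNReal.ofReal_mul (by positivity), ← pow_mul, mul_comm n d, pow_mul,
      ENNReal.ofReal_pow (by positivity), mul_assoc]
  have hc : c ≠ 0 := by simp [c, hr]
  have hball : μ (ball x t) ≠ ∞ := measure_ball_lt_top.ne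
  obtain ⟨n, hn⟩ := ENNReal.exists_nat_gt (ENNReal.div_lt_top hball hpos).ne
  have hbound : 2 ^ n * μ (U ∩ ball x t) ≤ μ (ball x t) := by
    have := (hlower n).trans (hupper n)
    rwa [mul_pow, mul_comm (2 ^ n), mul_assoc, ENNReal.mul_le_mul_iff_right (pow_ne_zero n hc)
      (ENNReal.pow_ne_top ENNReal.ofReal_ne_top)] at this
  have : μ (ball x t) / μ (U ∩ ball x t) < 2 ^ n :=
    hn.trans (by exact_mod_cast Nat.lt_two_pow_self)
  exact (ENNReal.div_lt_iff (Or.inl hpos) (Or.inr hball)).1 this |>.not_ge hbound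

theorem not_disjoint_image_of_isFixedPt {r s : ℝ} (hr : 0 < r) (hs : 0 < s)
    (hA : IsSimilarity r A) (hB : IsSimilarity s B) (hAx : Function.IsFixedPt A x)
    (hBx : Function.IsFixedPt B x) (hU : IsOpen U) (hne : U.Nonempty) (hAU : MapsTo A U U)
    (hBU : MapsTo B U U) : ¬ Disjoint (A '' U) (B '' U) := by
  intro hAB
  refine not_disjoint_image_of_isFixedPt_of_ratio_eq (mul_pos hr hs) (hA.comp hB)
    (mul_comm r s ▸ hB.comp hA) (hAx.comp hBx) (hBx.comp hAx) hU hne (hAU.comp hBU)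
    (hBU.comp hAU) (hAB.mono ?_ ?_)
  · rw [image_comp]
    exact image_mono hBU.image_subset
  · rw [image_comp]
    exact image_mono hAU.image_subset

end FixedPoint

theorem Perfect.not_countable {α : Type*} [MetricSpace α] [CompleteSpace α] {C : Set α}
    (hC : Perfect C) (hne : C.Nonempty) : ¬ C.Countable := by
  intro hcount
  obtain ⟨f, hfC, -, hf⟩ := hC.exists_nat_bool_injection hne
  have hmaps : MapsTo f univ C := fun a _ => hfC (mem_range_self a)
  have : ¬ Countable (ℕ → Bool) := by
    rw [not_countable_iff, ← Cardinal.aleph0_lt_mk_iff]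
    simpa using Cardinal.aleph0_lt_continuum
  exact this (countable_univ_iff.1 (hmaps.countable_of_injOn hf.injOn hcount))

namespace GIFS

variable {m : ℕ} {V E : Type} [Fintype V] [Fintype E] (G : GIFS m V E) {F : V → Set (Euc m)}

theorem isSimilarity_map (e : E) : IsSimilarity (G.ratio e) (G.map e) := G.map_similarity e

theorem isSimilarity_pathMap (p : List E) : IsSimilarity (G.pathRatio p) (G.pathMap p) := by
  induction p with
  | nil => exact IsSimilarity.id
  | cons e p ih => simpa [pathRatio, pathMap] using (G.isSimilarity_map e).comp ih

theorem pathRatio_pos (p : List E) : 0 < G.pathRatio p :=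
  List.prod_pos fun _ h => by
    obtain ⟨e, -, rfl⟩ := List.mem_map.1 h
    exact G.ratio_pos e

theorem mapsTo_pathMap {K : V → Set (Euc m)}
    (hK : ∀ e, MapsTo (G.map e) (K (G.dst e)) (K (G.src e))) {p : List E} {v w : V}
    (hp : G.IsPathFrom v w p) : MapsTo (G.pathMap p) (K w) (K v) := by
  induction p generalizing v with
  | nil => exact absurd rfl hp.1
  | cons e p ih =>
    obtain ⟨-, hchain, hhead, hlast⟩ := hp
    obtain rfl : G.src e = v := by simpa using hhead
    cases p with
    | nil =>
      obtain rfl : G.dst e = w := by simpa using hlast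
      exact hK e
    | cons e' q =>
      obtain ⟨hee', hchain'⟩ := List.isChain_cons_cons.1 hchain
      refine (hK e).comp (ih ⟨List.cons_ne_nil _ _, hchain', by simp [hee'], ?_⟩)
      rwa [List.getLast?_cons_cons] at hlast

theorem exists_cycle_map {u : V} {e : E} (he : G.src e = u) :
    ∃ (T : Euc m → Euc m) (r : ℝ), 0 < r ∧ IsSimilarity r T ∧
      ∀ K : V → Set (Euc m), (∀ e, MapsTo (G.map e) (K (G.dst e)) (K (G.src e))) →
        MapsTo T (K u) (K u) ∧ T '' K u ⊆ G.map e '' K (G.dst e) := by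
  subst he
  obtain ⟨p, hp⟩ := G.strongly_connected (G.dst e) (G.src e)
  refine ⟨G.map e ∘ G.pathMap p, G.ratio e * G.pathRatio p,
    mul_pos (G.ratio_pos e) (G.pathRatio_pos p),
    (G.isSimilarity_map e).comp (G.isSimilarity_pathMap p), fun K hK => ?_⟩
  have hpK : MapsTo (G.pathMap p) (K (G.src e)) (K (G.dst e)) := G.mapsTo_pathMap hK hp
  exact ⟨(hK e).comp hpK, by rw [image_comp]; exact image_mono hpK.image_subset⟩

variable {G}

theorem IsAttractor.mapsTo (hF : G.IsAttractor F) (e : E) :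
    MapsTo (G.map e) (F (G.dst e)) (F (G.src e)) := fun y hy => by
  rw [hF.2.2 (G.src e)]
  exact mem_biUnion (x := e) rfl (mem_image_of_mem _ hy)

theorem IsAttractor.subsingleton_of_subsingleton (hF : G.IsAttractor F) {u : V}
    (hu : (F u).Subsingleton) (v : V) : (F v).Subsingleton := by
  obtain ⟨p, hp⟩ := G.strongly_connected u v
  have hpF : MapsTo (G.pathMap p) (F v) (F u) := G.mapsTo_pathMap hF.mapsTo hp
  exact fun a ha b hb =>
    (G.isSimilarity_pathMap p).injective (G.pathRatio_pos p).ne' (hu (hpF ha) (hpF hb))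

theorem IsAttractor.nontrivial (hF : G.IsAttractor F) (hOSC : G.OSC) (u : V) :
    (F u).Nontrivial := by
  by_contra hu
  have hsub := hF.subsingleton_of_subsingleton (not_nontrivial_iff.1 hu)
  obtain ⟨U, hU, hUmaps, hUdisj⟩ := hOSC
  have hUinv : ∀ e, MapsTo (G.map e) (U (G.dst e)) (U (G.src e)) := fun e =>
    mapsTo_iff_image_subset.2 (hUmaps e)
  obtain ⟨e, f, hef, he, hf⟩ := G.two_edges u
  obtain ⟨Te, re, hre, hTe, hKe⟩ := G.exists_cycle_map he
  obtain ⟨Tf, rf, hrf, hTf, hKf⟩ := G.exists_cycle_map hf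
  obtain ⟨x, hx⟩ := hF.1 u
  have hfix : ∀ T, MapsTo T (F u) (F u) → Function.IsFixedPt T x :=
    fun T hT => hsub u (hT hx) hx
  refine not_disjoint_image_of_isFixedPt hre hrf hTe hTf (hfix Te (hKe F hF.mapsTo).1)
    (hfix Tf (hKf F hF.mapsTo).1) (hU u).2.1 (hU u).1 (hKe U hUinv).1 (hKf U hUinv).1 ?_
  exact (disjoint_iff_inter_eq_empty.2 (hUdisj u e f he hf hef)).mono (hKe U hUinv).2
    (hKf U hUinv).2

theorem IsAttractor.exists_pathMap_ratio_le (hF : G.IsAttractor F) {σ : ℝ}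
    (hσ : ∀ e, G.ratio e ≤ σ) (n : ℕ) {u : V} {x : Euc m} (hx : x ∈ F u) :
    ∃ v p, x ∈ G.pathMap p '' F v ∧ MapsTo (G.pathMap p) (F v) (F u) ∧
      G.pathRatio p ≤ σ ^ n := by
  induction n generalizing u x with
  | zero => exact ⟨u, [], ⟨x, hx, rfl⟩, mapsTo_id _, le_of_eq (pow_zero σ).symm⟩
  | succ n ih =>
    rw [hF.2.2 u] at hx
    obtain ⟨e, rfl, y, hy, rfl⟩ : ∃ e, G.src e = u ∧ x ∈ G.map e '' F (G.dst e) := by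
      simpa using hx
    obtain ⟨v, p, hyp, hpF, hp⟩ := ih hy
    refine ⟨v, e :: p, ?_, (hF.mapsTo e).comp hpF, ?_⟩
    · rw [show G.pathMap (e :: p) = G.map e ∘ G.pathMap p from rfl, image_comp]
      exact mem_image_of_mem _ hyp
    · rw [show G.pathRatio (e :: p) = G.ratio e * G.pathRatio p from List.prod_cons, pow_succ']
      exact mul_le_mul (hσ e) hp (G.pathRatio_pos p).le ((G.ratio_pos e).le.trans (hσ e))

theorem IsAttractor.mem_closure_diff_singleton (hF : G.IsAttractor F)
    (hnt : ∀ v, (F v).Nontrivial) {u : V} {x : Euc m} (hx : x ∈ F u) :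
    x ∈ closure (F u \ {x}) := by
  rw [Metric.mem_closure_iff]
  intro ε hε
  obtain ⟨C, hC⟩ := Metric.isBounded_iff.1
    (Bornology.isBounded_iUnion.2 fun v => (hF.2.1 v).isBounded)
  have : Nonempty E := ⟨(G.two_edges u).choose⟩
  obtain ⟨e, hσ⟩ := Finite.exists_max G.ratio
  have hlim : Tendsto (fun n => G.ratio e ^ n * C) atTop (𝓝 0) := by
    simpa using (tendsto_pow_atTop_nhds_zero_of_lt_one (G.ratio_pos e).le
      (G.ratio_lt_one e)).mul_const C
  obtain ⟨n, hn⟩ := (hlim.eventually (gt_mem_nhds hε)).exists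
  obtain ⟨v, p, ⟨x', hx', rfl⟩, hpF, hp⟩ := hF.exists_pathMap_ratio_le hσ n hx
  obtain ⟨y, hy, hyx⟩ := (hnt v).exists_ne x'
  refine ⟨G.pathMap p y, ⟨hpF hy, ((G.isSimilarity_pathMap p).injective
    (G.pathRatio_pos p).ne').ne hyx⟩, ?_⟩
  calc dist (G.pathMap p x') (G.pathMap p y) = G.pathRatio p * dist x' y :=
        G.isSimilarity_pathMap p x' y
    _ ≤ G.ratio e ^ n * C := mul_le_mul hp (hC (mem_iUnion_of_mem v hx')
        (mem_iUnion_of_mem v hy)) dist_nonneg (pow_nonneg (G.ratio_pos e).le n)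
    _ < ε := hn

end GIFS

theorem statement3_general
    {m : ℕ} {V E : Type} [Fintype V] [Fintype E]
    (G : GIFS m V E)
    (F : V → Set (Euc m)) (hF : G.IsAttractor F)
    (hOSC : G.OSC) :
    ∀ u : V, ¬ (F u).Countable ∧ ∀ x ∈ F u, x ∈ closure (F u \ {x}) := by
  intro u
  have hacc : ∀ x ∈ F u, x ∈ closure (F u \ {x}) := fun x hx =>
    hF.mem_closure_diff_singleton (hF.nontrivial hOSC) hx
  have hperf : Perfect (F u) := ⟨(hF.2.1 u).isClosed, fun x hx =>
    accPt_principal_iff_clusterPt.2 (mem_closure_iff_clusterPt.1 (hacc x hx))⟩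
  exact ⟨hperf.not_countable (hF.1 u), hacc⟩

/-- **Lemma (2.4(a)).** If the OSC holds then each attractor component `F u` is
uncountable and has no isolated points. -/
theorem statement3
    {m : ℕ} (hm : 1 ≤ m) {V E : Type} [Fintype V] [Fintype E]
    (G : GIFS m V E)
    (F : V → Set (Euc m)) (hF : G.IsAttractor F)
    (hOSC : G.OSC) :
    ∀ u : V, ¬ (F u).Countable ∧ ∀ x ∈ F u, x ∈ closure (F u \ {x}) :=
  statement3_general G F hF hOSC
end
end

section
/- Suppose the SSC holds, fix u ∈ V, let ε = (1/2)·min{ dist(S_e(F_{t(e)}), S_f(F_{t(f)})) : e, f ∈ E_u¹, e ≠ f } > 0, and let q ∈ ℝ and r ∈ (0, ε). Then: (a) M_u^q(F_u, r) = ∑_{e∈E_u¹} M_u^q(S_e(F_{t(e)}), r); (b) for each e ∈ E_u¹, M_u^q(S_e(F_{t(e)}), r) = p_e^q · M_{t(e)}^q(F_{t(e)}, r_e^{−1} r); (c) hence M_u^q(F_u, r) = ∑_{e∈E_u¹} p_e^q · M_{t(e)}^q(F_{t(e)}, r_e^{−1} r). -/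
open MeasureTheory Metric Set Filter Topology Asymptotics

noncomputable section

/-! Below the scale `ε` the pieces `S_e(F_{t(e)})`, `e ∈ E_u¹`, are more than `2r` apart, so the
`r`-separated subsets of `F_u` are exactly the disjoint unions of `r`-separated subsets of the
pieces, and the suprema add; this is (a). A closed `r`-ball centred in `S_e(F_{t(e)})` misses
every other piece, so self-similarity gives `μ_u(B̄(S_e x, r)) = p_e μ_{t(e)}(B̄(x, r_e⁻¹ r))`,
while `S_e` maps the `r_e⁻¹ r`-separated subsets of `F_{t(e)}` bijectively onto the
`r`-separated subsets of `S_e(F_{t(e)})`; this is (b). Adding suprema needs the packing sums to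
be bounded, which follows from a uniform positive lower bound on `μ_u(B̄(x, r))` over the
compact support `F_u`. -/

open scoped Pointwise

theorem mSupport_eq_support {X : Type} [TopologicalSpace X] [MeasurableSpace X]
    (μ : Measure X) : mSupport μ = μ.support := by
  rw [Measure.support_eq_forall_isOpen]
  ext x
  exact forall_congr' fun _ => Imp.swap

section PackSums

variable {X : Type*} [PseudoMetricSpace X] [MeasurableSpace X]

def packSums (μ : Measure X) (q : ℝ) (A : Set X) (r : ℝ) : Set ℝ :=
  {s : ℝ | ∃ D : Finset X, ↑D ⊆ A ∧
    (∀ x ∈ D, ∀ y ∈ D, x ≠ y → 2 * r < dist x y) ∧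
    s = ∑ x ∈ D, (μ (closedBall x r)).toReal ^ q}

variable {μ : Measure X} {q r : ℝ} {A B : Set X}

theorem zero_mem_packSums : (0 : ℝ) ∈ packSums μ q A r :=
  ⟨∅, by simp, by simp, by simp⟩

theorem packSums_mono (h : A ⊆ B) : packSums μ q A r ⊆ packSums μ q B r := by
  rintro _ ⟨D, hD, hsep, rfl⟩
  exact ⟨D, hD.trans h, hsep, rfl⟩

theorem packSums_union (hr : 0 ≤ r) (hAB : ∀ x ∈ A, ∀ y ∈ B, 2 * r < dist x y) :
    packSums μ q (A ∪ B) r = packSums μ q A r + packSums μ q B r := by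
  classical
  ext s
  constructor
  · rintro ⟨D, hD, hsep, rfl⟩
    have hsep_filter (p : X → Prop) [DecidablePred p] :
        ∀ x ∈ D.filter p, ∀ y ∈ D.filter p, x ≠ y → 2 * r < dist x y := fun x hx y hy =>
      hsep x (Finset.mem_of_mem_filter x hx) y (Finset.mem_of_mem_filter y hy)
    refine ⟨_, ⟨D.filter (· ∈ A), fun x hx => (Finset.mem_filter.1 hx).2, hsep_filter _, rfl⟩,
      _, ⟨D.filter (· ∉ A), fun x hx => (hD (Finset.mem_filter.1 hx).1).resolve_left
        (Finset.mem_filter.1 hx).2, hsep_filter _, rfl⟩,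
      Finset.sum_filter_add_sum_filter_not D _ _⟩
  · rintro ⟨_, ⟨D₁, hD₁, hsep₁, rfl⟩, _, ⟨D₂, hD₂, hsep₂, rfl⟩, rfl⟩
    have hfar : ∀ x ∈ D₁, ∀ y ∈ D₂, 2 * r < dist x y := fun x hx y hy =>
      hAB x (hD₁ hx) y (hD₂ hy)
    have hdisj : Disjoint D₁ D₂ := Finset.disjoint_left.2 fun x hx₁ hx₂ => by
      linarith [hfar x hx₁ x hx₂, dist_self x]
    refine ⟨D₁ ∪ D₂, ?_, fun x hx y hy hxy => ?_, (Finset.sum_union hdisj).symm⟩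
    · rw [Finset.coe_union]
      exact union_subset_union hD₁ hD₂
    rcases Finset.mem_union.1 hx with hx | hx <;> rcases Finset.mem_union.1 hy with hy | hy
    · exact hsep₁ x hx y hy hxy
    · exact hfar x hx y hy
    · exact dist_comm x y ▸ hfar y hy x hx
    · exact hsep₂ x hx y hy hxy

theorem IsCompact.exists_pos_le_measureReal_closedBall [IsFiniteMeasure μ] {K : Set X}
    (hK : IsCompact K) (hKμ : K ⊆ μ.support) {s : ℝ} (hs : 0 < s) :
    ∃ c : ℝ, 0 < c ∧ ∀ x ∈ K, c ≤ μ.real (closedBall x s) := by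
  obtain ⟨t, htK, hcover⟩ := hK.elim_nhds_subcover (fun x => ball x (s / 2))
    fun x _ => ball_mem_nhds x (half_pos hs)
  rcases t.eq_empty_or_nonempty with rfl | htne
  · exact ⟨1, one_pos, fun x hx => by simpa using hcover hx⟩
  refine ⟨t.inf' htne fun i => μ.real (ball i (s / 2)), ?_, fun x hx => ?_⟩
  · refine (Finset.lt_inf'_iff _).2 fun i hi =>
      ENNReal.toReal_pos ?_ (MeasureTheory.measure_ne_top μ _)
    exact ((Measure.mem_support_iff_forall i).1 (hKμ (htK i hi)) _
      (ball_mem_nhds i (half_pos hs))).ne'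
  obtain ⟨i, hi, hxi⟩ := mem_iUnion₂.1 (hcover hx)
  calc t.inf' htne (fun i => μ.real (ball i (s / 2))) ≤ μ.real (ball i (s / 2)) :=
        Finset.inf'_le _ hi
    _ ≤ μ.real (closedBall x s) := measureReal_mono fun y hy => by
        rw [mem_ball] at hy hxi
        rw [mem_closedBall]
        linarith [dist_triangle_right y x i]

variable [OpensMeasurableSpace X]

theorem card_mul_le_measureReal_univ [IsFiniteMeasure μ] {c : ℝ} {D : Finset X}
    (hsep : ∀ x ∈ D, ∀ y ∈ D, x ≠ y → 2 * r < dist x y)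
    (hc : ∀ x ∈ D, c ≤ μ.real (closedBall x r)) : D.card * c ≤ μ.real univ := by
  have hdisj : (↑D : Set X).PairwiseDisjoint fun x => closedBall x r := fun x hx y hy hxy =>
    closedBall_disjoint_closedBall (by linarith [hsep x hx y hy hxy])
  calc D.card * c = ∑ _x ∈ D, c := by rw [Finset.sum_const, nsmul_eq_mul]
    _ ≤ ∑ x ∈ D, μ.real (closedBall x r) := Finset.sum_le_sum hc
    _ = μ.real (⋃ x ∈ D, closedBall x r) :=
        (measureReal_biUnion_finset hdisj fun _ _ => measurableSet_closedBall).symm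
    _ ≤ μ.real univ := measureReal_mono (subset_univ _)

theorem bddAbove_packSums [IsFiniteMeasure μ] {c : ℝ} (hc : 0 < c)
    (hA : ∀ x ∈ A, c ≤ μ.real (closedBall x r)) : BddAbove (packSums μ q A r) := by
  set M := μ.real univ
  refine ⟨M / c * max (c ^ q) (M ^ q), ?_⟩
  rintro _ ⟨D, hD, hsep, rfl⟩
  have hterm : ∀ x ∈ D, μ.real (closedBall x r) ^ q ≤ max (c ^ q) (M ^ q) := fun x hx => by
    have hlo := hA x (hD hx)
    have hhi : μ.real (closedBall x r) ≤ M := measureReal_mono (subset_univ _)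
    rcases le_or_gt 0 q with hq | hq
    · exact le_max_of_le_right (Real.rpow_le_rpow (hc.le.trans hlo) hhi hq)
    · exact le_max_of_le_left (Real.rpow_le_rpow_of_nonpos hc hlo hq.le)
  calc ∑ x ∈ D, μ.real (closedBall x r) ^ q ≤ D.card * max (c ^ q) (M ^ q) := by
        simpa using Finset.sum_le_sum hterm
    _ ≤ M / c * max (c ^ q) (M ^ q) :=
        mul_le_mul_of_nonneg_right
          ((le_div_iff₀ hc).2 (card_mul_le_measureReal_univ hsep fun x hx => hA x (hD hx)))
          (le_max_of_le_left (Real.rpow_nonneg hc.le q))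

end PackSums

section Similarity

variable {X Y : Type*} [MetricSpace X] [PseudoMetricSpace Y] {f : X → Y} {ρ : ℝ}

theorem preimage_closedBall_of_dist_eq (hρ : 0 < ρ) (hf : ∀ x y, dist (f x) (f y) = ρ * dist x y)
    (x : X) (r : ℝ) : f ⁻¹' closedBall (f x) r = closedBall x (ρ⁻¹ * r) := by
  ext y
  rw [mem_preimage, mem_closedBall, mem_closedBall, hf, le_inv_mul_iff₀ hρ]

theorem packSums_image (hρ : 0 < ρ) (hf : ∀ x y, dist (f x) (f y) = ρ * dist x y) {p : ℝ}
    (hp : 0 ≤ p) [MeasurableSpace X] [MeasurableSpace Y] {μ : Measure Y} {ν : Measure X}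
    {A : Set X} {q r : ℝ}
    (hμν : ∀ x ∈ A, μ (closedBall (f x) r) = ENNReal.ofReal p * ν (closedBall x (ρ⁻¹ * r))) :
    packSums μ q (f '' A) r = p ^ q • packSums ν q A (ρ⁻¹ * r) := by
  classical
  have hinj : Function.Injective f := fun x y h => dist_eq_zero.1 <|
    (mul_eq_zero.1 (by rw [← hf, h, dist_self])).resolve_left hρ.ne'
  have hsep : ∀ x y, 2 * r < dist (f x) (f y) ↔ 2 * (ρ⁻¹ * r) < dist x y := fun x y => by
    rw [hf, mul_left_comm, inv_mul_lt_iff₀ hρ]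
  have hsum : ∀ D : Finset X, ↑D ⊆ A → ∑ y ∈ D.image f, (μ (closedBall y r)).toReal ^ q =
      p ^ q * ∑ x ∈ D, (ν (closedBall x (ρ⁻¹ * r))).toReal ^ q := fun D hD => by
    rw [Finset.sum_image fun x _ y _ h => hinj h, Finset.mul_sum]
    refine Finset.sum_congr rfl fun x hx => ?_
    rw [hμν x (hD hx), ENNReal.toReal_mul, ENNReal.toReal_ofReal hp,
      Real.mul_rpow hp ENNReal.toReal_nonneg]
  ext s
  simp only [packSums, mem_smul_set, Finset.subset_set_image_iff, smul_eq_mul]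
  constructor
  · rintro ⟨_, ⟨D, hD, rfl⟩, hsepD, rfl⟩
    simp only [Finset.forall_mem_image, hinj.ne_iff, hsep] at hsepD
    exact ⟨_, ⟨D, hD, hsepD, rfl⟩, (hsum D hD).symm⟩
  · rintro ⟨_, ⟨D, hD, hsepD, rfl⟩, rfl⟩
    refine ⟨D.image f, ⟨D, hD, rfl⟩, ?_, (hsum D hD).symm⟩
    simpa only [Finset.forall_mem_image, hinj.ne_iff, hsep] using hsepD

end Similarity

section PackMoment

variable {m : ℕ} {μ : Measure (Euc m)} {q r : ℝ}

theorem packMoment_eq_sSup_packSums (μ : Measure (Euc m)) (q : ℝ) (A : Set (Euc m)) (r : ℝ) :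
    packMoment μ q A r = sSup (packSums μ q A r) := rfl

theorem packMoment_biUnion {ι : Type*} (hr : 0 ≤ r) {s : Finset ι} {P : ι → Set (Euc m)}
    (hP : ∀ i ∈ s, ∀ j ∈ s, i ≠ j → ∀ x ∈ P i, ∀ y ∈ P j, 2 * r < dist x y)
    (hbdd : BddAbove (packSums μ q (⋃ i ∈ s, P i) r)) :
    packMoment μ q (⋃ i ∈ s, P i) r = ∑ i ∈ s, packMoment μ q (P i) r := by
  classical
  induction s using Finset.induction_on with
  | empty => simp [packMoment]
  | insert a s ha ih =>
    rw [Finset.set_biUnion_insert] at hbdd ⊢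
    have hfar : ∀ x ∈ P a, ∀ y ∈ ⋃ i ∈ s, P i, 2 * r < dist x y := fun x hx y hy => by
      obtain ⟨i, hi, hy⟩ := mem_iUnion₂.1 hy
      exact hP a (s.mem_insert_self a) i (Finset.mem_insert_of_mem hi) (by rintro rfl; exact ha hi)
        x hx y hy
    rw [Finset.sum_insert ha, ← ih (fun i hi j hj => hP i (Finset.mem_insert_of_mem hi) j
      (Finset.mem_insert_of_mem hj)) (hbdd.mono (packSums_mono subset_union_right)),
      packMoment_eq_sSup_packSums, packSums_union hr hfar]
    exact csSup_add ⟨0, zero_mem_packSums⟩ (hbdd.mono (packSums_mono subset_union_left))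
      ⟨0, zero_mem_packSums⟩ (hbdd.mono (packSums_mono subset_union_right))

theorem packMoment_image {n : ℕ} {f : Euc n → Euc m} {ρ : ℝ} (hρ : 0 < ρ)
    (hf : ∀ x y, dist (f x) (f y) = ρ * dist x y) {p : ℝ} (hp : 0 ≤ p) {ν : Measure (Euc n)}
    {A : Set (Euc n)}
    (hμν : ∀ x ∈ A, μ (closedBall (f x) r) = ENNReal.ofReal p * ν (closedBall x (ρ⁻¹ * r))) :
    packMoment μ q (f '' A) r = p ^ q * packMoment ν q A (ρ⁻¹ * r) := by
  rw [packMoment_eq_sSup_packSums, packSums_image hρ hf hp hμν,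
    Real.sSup_smul_of_nonneg (Real.rpow_nonneg hp q), smul_eq_mul, packMoment_eq_sSup_packSums]

end PackMoment

section SetDist

variable {X : Type} [PseudoMetricSpace X] {A B : Set X}

theorem setDist_nonneg : 0 ≤ setDist A B :=
  Real.sInf_nonneg (by rintro _ ⟨a, -, b, -, rfl⟩; exact dist_nonneg)

theorem setDist_le_dist {x y : X} (hx : x ∈ A) (hy : y ∈ B) : setDist A B ≤ dist x y :=
  csInf_le ⟨0, by rintro _ ⟨a, -, b, -, rfl⟩; exact dist_nonneg⟩ (mem_image2_of_mem hx hy)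

end SetDist

namespace GIFS

variable {m : ℕ} {V E : Type} [Fintype V] [Fintype E] (G : GIFS m V E)

theorem two_mul_lt_dist_of_lt {F : V → Set (Euc m)} {u : V} {ε r : ℝ}
    (hε : ε = (1 / 2) * sInf {d : ℝ | ∃ e f : E, G.src e = u ∧ G.src f = u ∧ e ≠ f ∧
      d = setDist (G.map e '' F (G.dst e)) (G.map f '' F (G.dst f))}) (hr : r < ε)
    {e f : E} (he : G.src e = u) (hf : G.src f = u) (hef : e ≠ f) {x y : Euc m}
    (hx : x ∈ G.map e '' F (G.dst e)) (hy : y ∈ G.map f '' F (G.dst f)) : 2 * r < dist x y := by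
  have hbdd : BddBelow {d : ℝ | ∃ e f : E, G.src e = u ∧ G.src f = u ∧ e ≠ f ∧
      d = setDist (G.map e '' F (G.dst e)) (G.map f '' F (G.dst f))} :=
    ⟨0, by rintro _ ⟨_, _, -, -, -, rfl⟩; exact setDist_nonneg⟩
  calc 2 * r < 2 * ε := by linarith
    _ = sInf _ := by rw [hε]; ring
    _ ≤ setDist _ _ := csInf_le hbdd ⟨e, f, he, hf, hef, rfl⟩
    _ ≤ dist x y := setDist_le_dist hx hy

theorem measure_closedBall_map {w : E → ℝ} {F : V → Set (Euc m)} {μ : V → Measure (Euc m)}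
    (hμ : G.IsSelfSimilarMeasures w F μ) {e : E} {x : Euc m} {r : ℝ}
    (hfar : ∀ f, G.src f = G.src e → f ≠ e → ∀ y ∈ F (G.dst f),
      r < dist (G.map f y) (G.map e x)) :
    μ (G.src e) (closedBall (G.map e x) r) =
      ENNReal.ofReal (w e) * μ (G.dst e) (closedBall x ((G.ratio e)⁻¹ * r)) := by
  rw [hμ.2.1 _ _ measurableSet_closedBall, Finset.sum_eq_single e,
    indicator_of_mem (s := {f | G.src f = G.src e}) rfl,
    preimage_closedBall_of_dist_eq (G.ratio_pos e) (G.map_similarity e)]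
  · intro f _ hfe
    by_cases hf : G.src f = G.src e
    · have hnull : G.map f ⁻¹' closedBall (G.map e x) r ⊆ (μ (G.dst f)).supportᶜ :=
        fun y hy hyF => by
          rw [← mSupport_eq_support, hμ.2.2] at hyF
          exact (hfar f hf hfe y hyF).not_ge hy
      rw [indicator_of_mem (s := {f | G.src f = G.src e}) hf,
        measure_mono_null hnull Measure.measure_compl_support, mul_zero]
    · exact indicator_of_notMem (s := {f | G.src f = G.src e}) hf _
  · simp

end GIFS

theorem statement12_general
    {m : ℕ} {V E : Type} [Fintype V] [Fintype E]
    [DecidableEq V]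
    (G : GIFS m V E) (w : E → ℝ) (hw : G.IsProbWeights w)
    (F : V → Set (Euc m)) (hF : G.IsAttractor F)
    (μ : V → Measure (Euc m)) (hμ : G.IsSelfSimilarMeasures w F μ)
    (u : V) (ε : ℝ)
    (hε : ε = (1 / 2) * sInf {d : ℝ | ∃ e f : E, G.src e = u ∧ G.src f = u ∧ e ≠ f ∧
      d = setDist (G.map e '' F (G.dst e)) (G.map f '' F (G.dst f))})
    (q : ℝ) (r : ℝ) (hr : r ∈ Set.Ioo 0 ε) :
    packMoment (μ u) q (F u) r =
      ∑ e ∈ Finset.univ.filter (fun e : E => G.src e = u),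
        packMoment (μ u) q (G.map e '' F (G.dst e)) r ∧
    (∀ e : E, G.src e = u →
      packMoment (μ u) q (G.map e '' F (G.dst e)) r =
        w e ^ q * packMoment (μ (G.dst e)) q (F (G.dst e)) ((G.ratio e)⁻¹ * r)) ∧
    packMoment (μ u) q (F u) r =
      ∑ e ∈ Finset.univ.filter (fun e : E => G.src e = u),
        w e ^ q * packMoment (μ (G.dst e)) q (F (G.dst e)) ((G.ratio e)⁻¹ * r) := by
  obtain ⟨hr0, hrε⟩ := hr
  have hfar : ∀ e f, G.src e = u → G.src f = u → e ≠ f → ∀ x ∈ G.map e '' F (G.dst e),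
      ∀ y ∈ G.map f '' F (G.dst f), 2 * r < dist x y :=
    fun e f he hf hef x hx y hy => G.two_mul_lt_dist_of_lt hε hrε he hf hef hx hy
  have hpiece : ∀ e : E, G.src e = u →
      packMoment (μ u) q (G.map e '' F (G.dst e)) r =
        w e ^ q * packMoment (μ (G.dst e)) q (F (G.dst e)) ((G.ratio e)⁻¹ * r) := by
    rintro e rfl
    refine packMoment_image (G.ratio_pos e) (G.map_similarity e) (hw.1 e).1.le fun x hx => ?_
    refine G.measure_closedBall_map hμ fun f hf hfe y hy => ?_
    linarith [hfar f e hf rfl hfe _ (mem_image_of_mem _ hy) _ (mem_image_of_mem _ hx)]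
  have hsplit : packMoment (μ u) q (F u) r = ∑ e ∈ Finset.univ.filter (fun e : E => G.src e = u),
      packMoment (μ u) q (G.map e '' F (G.dst e)) r := by
    have hFu : F u = ⋃ e ∈ Finset.univ.filter (fun e : E => G.src e = u),
        G.map e '' F (G.dst e) := by
      rw [hF.2.2 u]; simp
    have : IsProbabilityMeasure (μ u) := hμ.1 u
    obtain ⟨c, hc, hcF⟩ := (hF.2.1 u).exists_pos_le_measureReal_closedBall
      (by rw [← mSupport_eq_support, hμ.2.2 u]) hr0
    rw [hFu] at hcF ⊢
    refine packMoment_biUnion hr0.le (fun e he f hf hef => ?_) (bddAbove_packSums hc hcF)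
    exact hfar e f (Finset.mem_filter.1 he).2 (Finset.mem_filter.1 hf).2 hef
  exact ⟨hsplit, hpiece,
    hsplit.trans (Finset.sum_congr rfl fun e he => hpiece e (Finset.mem_filter.1 he).2)⟩

/-- **Lemma 3.1.** Under the SSC, fix `u ∈ V` and let
`ε = (1/2)·min{dist(S_e(F_{t(e)}), S_f(F_{t(f)})) : e ≠ f ∈ E_u¹}`. For every `q ∈ ℝ`
and `r ∈ (0,ε)`:
(a) `M_u^q(F_u,r) = ∑_{e∈E_u¹} M_u^q(S_e(F_{t(e)}),r)`;
(b) `M_u^q(S_e(F_{t(e)}),r) = p_e^q · M_{t(e)}^q(F_{t(e)}, r_e⁻¹ r)` for each `e ∈ E_u¹`;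
(c) `M_u^q(F_u,r) = ∑_{e∈E_u¹} p_e^q · M_{t(e)}^q(F_{t(e)}, r_e⁻¹ r)`. -/
theorem statement12
    {m : ℕ} (hm : 1 ≤ m) {V E : Type} [Fintype V] [Fintype E]
    [DecidableEq V] [DecidableEq E]
    (G : GIFS m V E) (w : E → ℝ) (hw : G.IsProbWeights w)
    (F : V → Set (Euc m)) (hF : G.IsAttractor F)
    (μ : V → Measure (Euc m)) (hμ : G.IsSelfSimilarMeasures w F μ)
    (hSSC : G.SSC F)
    (u : V) (ε : ℝ)
    (hε : ε = (1 / 2) * sInf {d : ℝ | ∃ e f : E, G.src e = u ∧ G.src f = u ∧ e ≠ f ∧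
      d = setDist (G.map e '' F (G.dst e)) (G.map f '' F (G.dst f))})
    (q : ℝ) (r : ℝ) (hr : r ∈ Set.Ioo 0 ε) :
    packMoment (μ u) q (F u) r =
      ∑ e ∈ Finset.univ.filter (fun e : E => G.src e = u),
        packMoment (μ u) q (G.map e '' F (G.dst e)) r ∧
    (∀ e : E, G.src e = u →
      packMoment (μ u) q (G.map e '' F (G.dst e)) r =
        w e ^ q * packMoment (μ (G.dst e)) q (F (G.dst e)) ((G.ratio e)⁻¹ * r)) ∧
    packMoment (μ u) q (F u) r =
      ∑ e ∈ Finset.univ.filter (fun e : E => G.src e = u),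
        w e ^ q * packMoment (μ (G.dst e)) q (F (G.dst e)) ((G.ratio e)⁻¹ * r) :=
  statement12_general G w hw F hF μ hμ u ε hε q r hr
end
end

section
/- Suppose the OSC holds with open sets (U_v)_{v∈V}, and let f, g ∈ E_u^* be two finite paths starting at u such that neither is a subpath of the other (f ⊄ g and g ⊄ f). Then (a) S_f(U_{t(f)}) ∩ S_g(U_{t(g)}) = ∅, and (b) S_f(F_{t(f)}) ∩ S_g(U_{t(g)}) = ∅. -/
open MeasureTheory Metric Set Filter Topology Asymptotics

noncomputable section

/-!
Write `f = p e f₁` and `g = p e' g₁` with `e ≠ e'`, both starting at the end of `p`. The OSC sets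
and the attractor are both mapped into themselves by every `S_e`, so `S_f(U)` and `S_f(F)` lie in
`S_p S_e(cl U)` and `S_g(U)` lies in `S_p S_{e'}(U)`. The sets `S_e(cl U)` and `S_{e'}(U)` are
disjoint because `S_{e'}(U)` is open (a similarity of `ℝ^m` is onto), and `S_p` is injective.
The attractor lies in `cl U`: at a point of `F` farthest from `U`, writing it as `S_e y` shows
that this largest distance is at most `r_e < 1` times itself.
-/

open Function

section Similarity

variable {X Y : Type*} [MetricSpace X] [PseudoMetricSpace Y] {f : X → Y} {r : ℝ}

lemma continuous_of_dist_eq_mul (hr : 0 ≤ r) (hf : ∀ x y, dist (f x) (f y) = r * dist x y) :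
    Continuous f :=
  (LipschitzWith.of_dist_le_mul (K := r.toNNReal) fun x y => by
    rw [hf, Real.coe_toNNReal _ hr]).continuous

lemma injective_of_dist_eq_mul (hr : 0 < r)
    (hf : ∀ x y, dist (f x) (f y) = r * dist x y) : Injective f := fun x y hxy => by
  simpa [hxy, hr.ne'] using hf x y

lemma isOpenMap_of_dist_eq_mul (hr : 0 < r) (hsurj : Surjective f)
    (hf : ∀ x y, dist (f x) (f y) = r * dist x y) : IsOpenMap f := by
  refine fun s hs => Metric.isOpen_iff.2 ?_
  rintro _ ⟨x, hx, rfl⟩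
  obtain ⟨ε, hε, hball⟩ := Metric.isOpen_iff.1 hs x hx
  refine ⟨r * ε, mul_pos hr hε, fun z hz => ?_⟩
  obtain ⟨w, rfl⟩ := hsurj z
  rw [Metric.mem_ball, hf] at hz
  exact ⟨w, hball (Metric.mem_ball.2 (lt_of_mul_lt_mul_left hz hr.le)), rfl⟩

lemma infDist_image_le_of_dist_eq_mul (hr : 0 < r) (hf : ∀ x y, dist (f x) (f y) = r * dist x y)
    (x : X) (s : Set X) : Metric.infDist (f x) (f '' s) ≤ r * Metric.infDist x s := by
  rcases s.eq_empty_or_nonempty with rfl | hs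
  · simp
  rw [← div_le_iff₀' hr, Metric.le_infDist hs]
  intro y hy
  rw [div_le_iff₀' hr, ← hf]
  exact Metric.infDist_le_dist_of_mem (Set.mem_image_of_mem f hy)

end Similarity

lemma surjective_of_dist_eq_mul {W : Type*} [NormedAddCommGroup W] [NormedSpace ℝ W]
    [StrictConvexSpace ℝ W] [FiniteDimensional ℝ W] {f : W → W} {r : ℝ} (hr : 0 < r)
    (hf : ∀ x y, dist (f x) (f y) = r * dist x y) : Surjective f := by
  have hiso : Isometry fun x => r⁻¹ • f x := Isometry.of_dist_eq fun x y => by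
    rw [dist_smul₀, hf, Real.norm_of_nonneg (inv_nonneg.2 hr.le), inv_mul_cancel_left₀ hr.ne']
  intro y
  let _ : Inhabited W := ⟨0⟩
  obtain ⟨x, hx⟩ := (hiso.affineIsometryOfStrictConvexSpace.toAffineIsometryEquiv rfl).surjective
    (r⁻¹ • y)
  refine ⟨x, ?_⟩
  simpa [smul_right_inj (inv_ne_zero hr.ne')] using hx

lemma List.exists_eq_append_cons_of_not_prefix {α : Type*} :
    ∀ {f g : List α}, ¬ f <+: g → ¬ g <+: f →
      ∃ (p : List α) (a b : α) (f₁ g₁ : List α), f = p ++ a :: f₁ ∧ g = p ++ b :: g₁ ∧ a ≠ b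
  | [], _, hfg, _ => absurd List.nil_prefix hfg
  | _ :: _, [], _, hgf => absurd List.nil_prefix hgf
  | a :: f, b :: g, hfg, hgf => by
    by_cases hab : a = b
    · subst hab
      obtain ⟨p, c, d, f₁, g₁, rfl, rfl, hcd⟩ := exists_eq_append_cons_of_not_prefix
        (fun h => hfg (List.cons_prefix_cons.2 ⟨rfl, h⟩))
        (fun h => hgf (List.cons_prefix_cons.2 ⟨rfl, h⟩))
      exact ⟨a :: p, c, d, f₁, g₁, rfl, rfl, hcd⟩
    · exact ⟨[], a, b, f, g, rfl, rfl, hab⟩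

lemma IsSubpath.of_prefix {E : Type} {f g : List E} (h : f <+: g) : IsSubpath f g :=
  let ⟨t, ht⟩ := h
  ⟨[], t, by simp [ht]⟩

namespace GIFS

variable {m : ℕ} {V E : Type} [Fintype V] [Fintype E] (G : GIFS m V E)

lemma continuous_map (e : E) : Continuous (G.map e) :=
  continuous_of_dist_eq_mul (G.ratio_pos e).le (G.map_similarity e)

lemma isOpenMap_map (e : E) : IsOpenMap (G.map e) :=
  isOpenMap_of_dist_eq_mul (G.ratio_pos e)
    (surjective_of_dist_eq_mul (G.ratio_pos e) (G.map_similarity e)) (G.map_similarity e)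

lemma pathMap_cons (e : E) (p : List E) : G.pathMap (e :: p) = G.map e ∘ G.pathMap p := rfl

lemma pathMap_append (p q : List E) : G.pathMap (p ++ q) = G.pathMap p ∘ G.pathMap q := by
  induction p with
  | nil => rfl
  | cons a p ih => rw [List.cons_append, pathMap_cons, pathMap_cons, ih, comp_assoc]

lemma injective_pathMap (p : List E) : Injective (G.pathMap p) := by
  induction p with
  | nil => exact injective_id
  | cons e p ih =>
    exact (injective_of_dist_eq_mul (G.ratio_pos e) (G.map_similarity e)).comp ih

lemma pathDst_cons (v : V) (e : E) (p : List E) :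
    G.pathDst v (e :: p) = G.pathDst (G.dst e) p := by
  cases p <;> simp [pathDst, List.getLast?_cons]

lemma pathDst_append (v : V) (p q : List E) :
    G.pathDst v (p ++ q) = G.pathDst (G.pathDst v p) q := by
  induction p generalizing v with
  | nil => rfl
  | cons a p ih => rw [List.cons_append, pathDst_cons, pathDst_cons, ih]

lemma IsPathFrom.append_cons {u v : V} {p q : List E} {e : E}
    (h : G.IsPathFrom u v (p ++ e :: q)) :
    G.src e = G.pathDst u p ∧ G.IsPath (e :: q) ∧ G.pathDst (G.dst e) q = v := by
  obtain ⟨-, hpath, hhead, hlast⟩ := h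
  obtain ⟨-, hpath_eq, hjoin⟩ := List.isChain_append.1 hpath
  refine ⟨?_, hpath_eq, ?_⟩
  · cases hp : p.getLast? with
    | none => simp_all [pathDst]
    | some a => simpa [pathDst, hp] using (hjoin a hp e rfl).symm
  · have : G.pathDst u (p ++ e :: q) = v := by rw [pathDst, hlast]; rfl
    rwa [pathDst_append, pathDst_cons] at this

def IsSubinvariant (S : V → Set (Euc m)) : Prop := ∀ e, G.map e '' S (G.dst e) ⊆ S (G.src e)

variable {G}

lemma OSCWith.isSubinvariant {U : V → Set (Euc m)} (hU : G.OSCWith U) : G.IsSubinvariant U :=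
  hU.2.1

lemma IsAttractor.isSubinvariant {F : V → Set (Euc m)} (hF : G.IsAttractor F) :
    G.IsSubinvariant F := fun e => by
  rw [hF.2.2 (G.src e)]
  exact Set.subset_biUnion_of_mem (u := fun e => G.map e '' F (G.dst e)) rfl

lemma IsSubinvariant.image_pathMap_subset {S : V → Set (Euc m)} (hS : G.IsSubinvariant S) :
    ∀ {e : E} {q : List E}, G.IsPath (e :: q) →
      G.pathMap q '' S (G.pathDst (G.dst e) q) ⊆ S (G.dst e)
  | _, [], _ => by simp [pathMap, pathDst]
  | e, a :: q, hq => by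
    obtain ⟨hea, hq⟩ := List.isChain_cons_cons.1 hq
    rw [pathDst_cons, pathMap_cons, Set.image_comp, hea]
    exact (Set.image_mono (hS.image_pathMap_subset hq)).trans (hS a)

lemma IsSubinvariant.image_pathMap_append_cons_subset {S : V → Set (Euc m)}
    (hS : G.IsSubinvariant S) {p q : List E} {e : E} (h : G.IsPath (e :: q)) :
    G.pathMap (p ++ e :: q) '' S (G.pathDst (G.dst e) q) ⊆
      G.pathMap p '' (G.map e '' S (G.dst e)) := by
  rw [pathMap_append, pathMap_cons, Set.image_comp, Set.image_comp]
  exact Set.image_mono (Set.image_mono (hS.image_pathMap_subset h))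

lemma IsAttractor.subset_closure {F U : V → Set (Euc m)} (hF : G.IsAttractor F)
    (hUne : ∀ v, (U v).Nonempty) (hU : G.IsSubinvariant U) (v : V) : F v ⊆ closure (U v) := by
  have : Nonempty V := ⟨v⟩
  choose x hxF hxmax using fun w =>
    (hF.2.1 w).exists_isMaxOn (hF.1 w) (Metric.continuous_infDist_pt (U w)).continuousOn
  obtain ⟨w₀, hw₀⟩ := Finite.exists_max fun w => Metric.infDist (x w) (U w)
  set M := Metric.infDist (x w₀) (U w₀)
  have hbound : ∀ w, ∀ y ∈ F w, Metric.infDist y (U w) ≤ M := fun w _ hy =>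
    (hxmax w hy).trans (hw₀ w)
  have hM : M = 0 := by
    obtain ⟨e, he, y, hy, hxy⟩ : ∃ e, G.src e = w₀ ∧ ∃ y ∈ F (G.dst e), G.map e y = x w₀ := by
      have hx := hxF w₀
      rw [hF.2.2 w₀] at hx
      simpa using hx
    have hMle : M ≤ G.ratio e * M := calc
      M = Metric.infDist (G.map e y) (U (G.src e)) := by rw [hxy, he]
      _ ≤ Metric.infDist (G.map e y) (G.map e '' U (G.dst e)) :=
        Metric.infDist_le_infDist_of_subset (hU e) ((hUne _).image _)
      _ ≤ G.ratio e * Metric.infDist y (U (G.dst e)) :=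
        infDist_image_le_of_dist_eq_mul (G.ratio_pos e) (G.map_similarity e) y _
      _ ≤ G.ratio e * M := mul_le_mul_of_nonneg_left (hbound _ y hy) (G.ratio_pos e).le
    nlinarith [G.ratio_lt_one e, Metric.infDist_nonneg (x := x w₀) (s := U w₀)]
  intro y hy
  rw [Metric.mem_closure_iff_infDist_zero (hUne v)]
  exact le_antisymm (hM ▸ hbound v y hy) Metric.infDist_nonneg

lemma OSCWith.disjoint_image_closure {U : V → Set (Euc m)} (hU : G.OSCWith U) {e e' : E}
    (hsrc : G.src e = G.src e') (hne : e ≠ e') :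
    Disjoint (G.map e '' closure (U (G.dst e))) (G.map e' '' U (G.dst e')) := by
  have hdisj : Disjoint (G.map e '' U (G.dst e)) (G.map e' '' U (G.dst e')) :=
    Set.disjoint_iff_inter_eq_empty.2 (hU.2.2 _ e e' rfl hsrc.symm hne)
  have hopen : IsOpen (G.map e' '' U (G.dst e')) := G.isOpenMap_map e' _ (hU.1 _).2.1
  exact (hdisj.closure_left hopen).mono_left
    (image_closure_subset_closure_image (G.continuous_map e))

end GIFS

theorem statement15_general
    {m : ℕ} {V E : Type} [Fintype V] [Fintype E]
    (G : GIFS m V E)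
    (F : V → Set (Euc m)) (hF : G.IsAttractor F)
    (U : V → Set (Euc m)) (hU : G.OSCWith U)
    (u vf vg : V) (f g : List E)
    (hf : G.IsPathFrom u vf f) (hg : G.IsPathFrom u vg g)
    (hfg : ¬ IsSubpath f g) (hgf : ¬ IsSubpath g f) :
    (G.pathMap f '' U vf) ∩ (G.pathMap g '' U vg) = ∅ ∧
    (G.pathMap f '' F vf) ∩ (G.pathMap g '' U vg) = ∅ := by
  obtain ⟨p, e, e', f₁, g₁, rfl, rfl, hee'⟩ := List.exists_eq_append_cons_of_not_prefix
    (fun h => hfg (.of_prefix h)) (fun h => hgf (.of_prefix h))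
  obtain ⟨hsrc, hpath, rfl⟩ := hf.append_cons
  obtain ⟨hsrc', hpath', rfl⟩ := hg.append_cons
  have hUsub := hU.isSubinvariant
  have hsibling := hU.disjoint_image_closure (hsrc.trans hsrc'.symm) hee'
  have hgsub := hUsub.image_pathMap_append_cons_subset (p := p) hpath'
  simp only [← Set.disjoint_iff_inter_eq_empty]
  constructor
  · refine .mono (hUsub.image_pathMap_append_cons_subset hpath) hgsub ?_
    rw [Set.disjoint_image_iff (G.injective_pathMap p)]
    exact hsibling.mono_left (Set.image_mono subset_closure)
  · refine .mono (hF.isSubinvariant.image_pathMap_append_cons_subset hpath) hgsub ?_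
    rw [Set.disjoint_image_iff (G.injective_pathMap p)]
    exact hsibling.mono_left (Set.image_mono (hF.subset_closure (fun v => (hU.1 v).1) hUsub _))

/-- **Lemma 4.1.** Suppose the OSC holds with open sets `(U_v)`, and let `f, g` be finite
paths starting at `u`, neither a subpath of the other. Then
(a) `S_f(U_{t(f)}) ∩ S_g(U_{t(g)}) = ∅` and (b) `S_f(F_{t(f)}) ∩ S_g(U_{t(g)}) = ∅`. -/
theorem statement15
    {m : ℕ} (hm : 1 ≤ m) {V E : Type} [Fintype V] [Fintype E]
    (G : GIFS m V E)
    (F : V → Set (Euc m)) (hF : G.IsAttractor F)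
    (U : V → Set (Euc m)) (hU : G.OSCWith U)
    (u vf vg : V) (f g : List E)
    (hf : G.IsPathFrom u vf f) (hg : G.IsPathFrom u vg g)
    (hfg : ¬ IsSubpath f g) (hgf : ¬ IsSubpath g f) :
    (G.pathMap f '' U vf) ∩ (G.pathMap g '' U vg) = ∅ ∧
    (G.pathMap f '' F vf) ∩ (G.pathMap g '' U vg) = ∅ :=
  statement15_general G F hF U hU u vf vg f g hf hg hfg hgf
end
end
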